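/- arXiv:2303.09265 — 3 statements merged into one kernel-verified Lean document; each statement's English description precedes it below -/
import Mathlib

section
/- Let p be an odd prime, q a power of p, and let ℓ : F_{q²} → F_{q²} be an F_p-linear bijection with inverse ℓ^{−1}. Then the function x^{q+1} + ℓ(x²) is a planar function on F_{q²} if and only if u² − N(ℓ^{−1}(u)) is a nonzero square in F_q for every u ∈ F_q*. -/
/-!
Write `σ x = x ^ q` for the conjugation of `F_{q²}` over `F_q`. Since `f (x + c) - f x` is the
additive map `x ↦ c σ x + σ c x + ℓ (2 c x)` plus a constant, `f` is planar iff these maps have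
trivial kernels. For a kernel element `x ≠ 0` put `a = 2 c x`, `u = ℓ a ∈ F_q*` and
`w = σ c / c`; then `w` is a root of norm one of `a w² + 2 u w + σ a`, and by Hilbert 90 every
such root arises this way. A root of norm one exists iff `e = w a + u` satisfies `σ e = -e`,
where `e² = u² - N(a)`. Finally, every `D ∈ F_q` is a square in `F_{q²}`, and its square roots
are either fixed or negated by `σ`: so `D` has a square root negated by `σ` iff it is not a
nonzero square in `F_q`.
-/

open Function

def IsPlanar {F : Type*} [Ring F] (f : F → F) : Prop :=
  ∀ c : F, c ≠ 0 → Bijective (fun x => f (x + c) - f x)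

section Involution

variable {F : Type*} [Field F] (σ : F →+* F) (ℓ : F ≃+ F)

def polarMap (c : F) : F →+ F where
  toFun x := c * σ x + σ c * x + ℓ (2 * c * x)
  map_zero' := by simp
  map_add' x y := by simp only [map_add, mul_add]; ring

theorem sub_eq_polarMap_add (c x : F) :
    (σ (x + c) * (x + c) + ℓ ((x + c) ^ 2)) - (σ x * x + ℓ (x ^ 2)) =
      polarMap σ ℓ c x + (σ c * c + ℓ (c ^ 2)) := by
  have hsq : (x + c) ^ 2 = x ^ 2 + (2 * c * x + c ^ 2) := by ring
  simp only [hsq, map_add, polarMap, AddMonoidHom.coe_mk, ZeroHom.coe_mk]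
  ring

theorem isPlanar_iff_polarMap [Finite F] :
    IsPlanar (fun x => σ x * x + ℓ (x ^ 2)) ↔ ∀ c ≠ 0, ∀ x, polarMap σ ℓ c x = 0 → x = 0 := by
  refine forall₂_congr fun c _ => ?_
  simp only [sub_eq_polarMap_add]
  rw [← injective_iff_map_eq_zero, Finite.injective_iff_bijective]
  exact (Equiv.addRight _).bijective.of_comp_iff' (polarMap σ ℓ c)

variable {σ}

/-- Hilbert's Theorem 90 for the involution `σ`. -/
theorem exists_ne_zero_map_eq_mul (hσ : ∀ x, σ (σ x) = x) (hne : ∃ t, σ t ≠ t) {w : F}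
    (hw : w * σ w = 1) : ∃ c ≠ 0, σ c = w * c := by
  obtain ⟨b, hb0, hb⟩ : ∃ b ≠ 0, w * σ b = b := by
    by_cases hw1 : w = -1
    · obtain ⟨t, ht⟩ := hne
      refine ⟨t - σ t, sub_ne_zero.mpr ht.symm, ?_⟩
      rw [map_sub, hσ, hw1]
      ring
    · refine ⟨1 + w, fun h => hw1 (eq_neg_of_add_eq_zero_right h), ?_⟩
      rw [map_add, map_one, mul_add, hw]
      ring
  exact ⟨σ b, (map_ne_zero σ).mpr hb0, by rw [hσ, hb]⟩

theorem polarMap_div_eq_zero {a c w : F} (hc0 : c ≠ 0) (hc : σ c = w * c) (hw : w ≠ 0)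
    (h2 : (2 : F) ≠ 0) (hroot : a * w ^ 2 + 2 * ℓ a * w + σ a = 0) :
    polarMap σ ℓ c (a / (2 * c)) = 0 := by
  have hx : 2 * c * (a / (2 * c)) = a := by field_simp
  simp only [polarMap, AddMonoidHom.coe_mk, ZeroHom.coe_mk, hx, map_div₀, map_mul, map_ofNat, hc]
  field_simp
  linear_combination hroot

theorem root_of_polarMap_eq_zero (hσ : ∀ x, σ (σ x) = x) {c x : F} (hc0 : c ≠ 0)
    (h : polarMap σ ℓ c x = 0) :
    σ (ℓ (2 * c * x)) = ℓ (2 * c * x) ∧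
      2 * c * x * (σ c / c) ^ 2 + 2 * ℓ (2 * c * x) * (σ c / c) + σ (2 * c * x) = 0 := by
  change c * σ x + σ c * x + ℓ (2 * c * x) = 0 at h
  have hℓ : ℓ (2 * c * x) = -(c * σ x + σ c * x) := by linear_combination h
  rw [hℓ]
  constructor
  · rw [map_neg, map_add, map_mul, map_mul, hσ, hσ]
    ring
  · simp only [map_mul, map_ofNat]
    field_simp
    ring

theorem polarMap_injective_iff (hσ : ∀ x, σ (σ x) = x) (hne : ∃ t, σ t ≠ t) (h2 : (2 : F) ≠ 0) :
    (∀ c ≠ 0, ∀ x, polarMap σ ℓ c x = 0 → x = 0) ↔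
      ∀ u ≠ 0, σ u = u → ¬∃ w, w * σ w = 1 ∧ ℓ.symm u * w ^ 2 + 2 * u * w + σ (ℓ.symm u) = 0 := by
  constructor
  · rintro h u hu0 - ⟨w, hw, hroot⟩
    obtain ⟨a, rfl⟩ := ℓ.surjective u
    rw [ℓ.symm_apply_apply] at hroot
    have hw0 : w ≠ 0 := left_ne_zero_of_mul_eq_one hw
    obtain ⟨c, hc0, hc⟩ := exists_ne_zero_map_eq_mul hσ hne hw
    have ha : a = 0 := by
      simpa [hc0, h2] using h c hc0 _ (polarMap_div_eq_zero ℓ hc0 hc hw0 h2 hroot)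
    exact hu0 (by rw [ha, map_zero])
  · intro h c hc0 x hx
    by_contra hx0
    obtain ⟨hu, hroot⟩ := root_of_polarMap_eq_zero ℓ hσ hc0 hx
    have hσc : σ c ≠ 0 := (map_ne_zero σ).mpr hc0
    refine h _ (by simp [hc0, hx0, h2]) hu ⟨σ c / c, by rw [map_div₀, hσ]; field_simp, ?_⟩
    rwa [ℓ.symm_apply_apply]

theorem exists_norm_one_root_iff {u a : F} (hu : σ u = u) (ha : a ≠ 0) :
    (∃ w, w * σ w = 1 ∧ a * w ^ 2 + 2 * u * w + σ a = 0) ↔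
      ∃ e, σ e = -e ∧ e ^ 2 = u ^ 2 - σ a * a := by
  constructor
  · rintro ⟨w, hw, hroot⟩
    refine ⟨w * a + u, ?_, by linear_combination a * hroot⟩
    rw [map_add, map_mul, hu]
    linear_combination σ w * hroot - (a * w + 2 * u) * hw
  · rintro ⟨e, he, he2⟩
    have hσa : σ a ≠ 0 := (map_ne_zero σ).mpr ha
    refine ⟨(e - u) / a, ?_, ?_⟩
    · rw [map_div₀, map_sub, he, hu]
      field_simp
      linear_combination -he2
    · field_simp
      linear_combination he2

theorem exists_map_eq_neg_sq_iff (h2 : (2 : F) ≠ 0) {D : F} (hD : σ D = D) (hsq : IsSquare D) :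
    (∃ e, σ e = -e ∧ e ^ 2 = D) ↔ ¬∃ b ≠ 0, σ b = b ∧ b ^ 2 = D := by
  constructor
  · rintro ⟨e, he, rfl⟩ ⟨b, hb0, hb, hbe⟩
    have hσe : σ e = e := by
      rcases sq_eq_sq_iff_eq_or_eq_neg.mp hbe with rfl | rfl
      · exact hb
      · rwa [map_neg, neg_inj] at hb
    have he0 : e = 0 := by
      have h2e : 2 * e = 0 := by linear_combination he - hσe
      exact (mul_eq_zero.mp h2e).resolve_left h2
    subst he0
    exact hb0 (by simpa using hbe)
  · intro hno
    obtain ⟨r, rfl⟩ := hsq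
    have hσr : σ r ^ 2 = r ^ 2 := by rw [← map_pow, sq, hD]
    rcases sq_eq_sq_iff_eq_or_eq_neg.mp hσr with hr | hr
    · by_cases hr0 : r = 0
      · exact ⟨0, by simp, by simp [hr0]⟩
      · exact absurd ⟨r, hr0, hr, sq r⟩ hno
    · exact ⟨r, hr, sq r⟩

theorem isPlanar_map_mul_self_add_iff [Finite F] (hσ : ∀ x, σ (σ x) = x) (hne : ∃ t, σ t ≠ t)
    (h2 : (2 : F) ≠ 0) (hsq : ∀ D, σ D = D → IsSquare D) :
    IsPlanar (fun x => σ x * x + ℓ (x ^ 2)) ↔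
      ∀ u ≠ 0, σ u = u → ∃ b ≠ 0, σ b = b ∧ b ^ 2 = u ^ 2 - σ (ℓ.symm u) * ℓ.symm u := by
  rw [isPlanar_iff_polarMap, polarMap_injective_iff ℓ hσ hne h2]
  refine forall₃_congr fun u hu0 hu => ?_
  have hD : σ (u ^ 2 - σ (ℓ.symm u) * ℓ.symm u) = u ^ 2 - σ (ℓ.symm u) * ℓ.symm u := by
    rw [map_sub, map_pow, map_mul, hσ, hu, mul_comm]
  rw [exists_norm_one_root_iff hu (by simpa using hu0), exists_map_eq_neg_sq_iff h2 hD (hsq _ hD),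
    not_not]

end Involution

section FiniteField

variable {F : Type*} [Field F] [Fintype F] {q : ℕ}

theorem exists_pow_ne_self (hF : Fintype.card F = q ^ 2) : ∃ t : F, t ^ q ≠ t := by
  by_contra! h
  have hq : 2 ≤ q := by
    have := Fintype.one_lt_card (α := F)
    rw [hF] at this
    by_contra! hq
    interval_cases q <;> simp at this
  have hunits : ∀ x : Fˣ, x ^ (q - 1) = 1 := fun x => by
    have hx : x ^ q = x := Units.ext (by simpa using h x)
    apply mul_right_cancel (b := x)
    rw [pow_sub_one_mul (by omega), hx, one_mul]
  have hdvd := (FiniteField.forall_pow_eq_one_iff F (q - 1)).mp hunits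
  rw [hF] at hdvd
  have := Nat.le_of_dvd (by omega) hdvd
  have : q < q ^ 2 := by nlinarith
  omega

theorem ringChar_ne_two_of_card_eq_sq (hq : Odd q) (hF : Fintype.card F = q ^ 2) :
    ringChar F ≠ 2 := by
  rw [Ne, FiniteField.even_card_iff_char_two, hF, Nat.odd_iff.mp hq.pow]
  exact one_ne_zero

theorem isSquare_of_pow_eq_self (hq : Odd q) (hF : Fintype.card F = q ^ 2) {D : F}
    (hD : D ^ q = D) : IsSquare D := by
  rcases eq_or_ne D 0 with rfl | hD0
  · exact IsSquare.zero
  have hchar := ringChar_ne_two_of_card_eq_sq hq hF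
  obtain ⟨r, rfl⟩ := hq
  have hD1 : D ^ (2 * r) = 1 := by
    apply mul_left_cancel₀ hD0
    rw [← pow_succ', hD, mul_one]
  have hhalf : (2 * r + 1) ^ 2 / 2 = 2 * r * (r + 1) := by
    rw [show (2 * r + 1) ^ 2 = 2 * (2 * r * (r + 1)) + 1 by ring, Nat.mul_add_div two_pos]
    norm_num
  rw [FiniteField.isSquare_iff hchar hD0, hF, hhalf, pow_mul, hD1, one_pow]

end FiniteField

theorem planar_iff_inverse_condition_general
    (p m : ℕ) (hp : p.Prime) (hodd : Odd p)
    (q : ℕ) (hq : q = p ^ m)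
    (F : Type*) [Field F] [Fintype F] (hF : Fintype.card F = q ^ 2)
    (ℓ ℓinv : F → F) (hℓ : ∀ x y, ℓ (x + y) = ℓ x + ℓ y)
    (hli : Function.LeftInverse ℓinv ℓ) (hri : Function.RightInverse ℓinv ℓ)
    (f : F → F) (hf : ∀ x, f x = x ^ (q + 1) + ℓ (x ^ 2)) :
    (∀ c : F, c ≠ 0 → Function.Bijective (fun x => f (x + c) - f x)) ↔
      (∀ u : F, u ≠ 0 → u ^ q = u →
        ∃ b : F, b ≠ 0 ∧ b ^ q = b ∧ b ^ 2 = u ^ 2 - (ℓinv u) ^ (q + 1)) := by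
  have : Fact p.Prime := ⟨hp⟩
  have : CharP F p := charP_of_card_eq_prime_pow (f := m * 2) (by rw [hF, hq, pow_mul])
  have hσ : ∀ x : F, iterateFrobenius F p m x = x ^ q := fun x => by rw [iterateFrobenius_def, hq]
  have hqodd : Odd q := hq ▸ hodd.pow
  let L : F ≃+ F := AddEquiv.mk' ⟨ℓ, ℓinv, hli, hri⟩ hℓ
  have hfL : f = fun x => iterateFrobenius F p m x * x + L (x ^ 2) :=
    funext fun x => by rw [hf, pow_succ, hσ]; rfl
  have key := isPlanar_map_mul_self_add_iff (σ := iterateFrobenius F p m) L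
    (fun x => by rw [hσ, hσ, ← pow_mul, ← sq, ← hF, FiniteField.pow_card])
    (by simpa only [hσ] using exists_pow_ne_self hF)
    (Ring.two_ne_zero (ringChar_ne_two_of_card_eq_sq hqodd hF))
    (fun D hD => isSquare_of_pow_eq_self hqodd hF (by rwa [← hσ]))
  rw [← hfL] at key
  simp only [hσ, ← pow_succ] at key
  exact key

/-- for a linearized permutation `ℓ` of `F_{q²}` with inverse `ℓinv`,
the function `x^{q+1} + ℓ(x²)` is planar on `F_{q²}` iff `u² − N(ℓ⁻¹(u))` is a
nonzero square in `F_q` for every `u ∈ F_q*`. -/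
theorem planar_iff_inverse_condition
    (p m : ℕ) (hp : p.Prime) (hodd : Odd p) (hm : 0 < m)
    (q : ℕ) (hq : q = p ^ m)
    (F : Type*) [Field F] [Fintype F] (hF : Fintype.card F = q ^ 2)
    (ℓ ℓinv : F → F) (hℓ : ∀ x y, ℓ (x + y) = ℓ x + ℓ y)
    (hli : Function.LeftInverse ℓinv ℓ) (hri : Function.RightInverse ℓinv ℓ)
    (f : F → F) (hf : ∀ x, f x = x ^ (q + 1) + ℓ (x ^ 2)) :
    (∀ c : F, c ≠ 0 → Function.Bijective (fun x => f (x + c) - f x)) ↔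
      (∀ u : F, u ≠ 0 → u ^ q = u →
        ∃ b : F, b ≠ 0 ∧ b ^ q = b ∧ b ^ 2 = u ^ 2 - (ℓinv u) ^ (q + 1)) :=
  planar_iff_inverse_condition_general p m hp hodd q hq F hF ℓ ℓinv hℓ hli hri f hf
end

section
/- Let p be an odd prime, q a power of p, and let ℓ : F_{q²} → F_{q²} be an F_p-linear map such that ℓ(F_{q²}) ∩ F_q = {0} and such that −N(u) is a nonzero square in F_q for every nonzero u ∈ F_{q²} with ℓ(u) = 0. Then x^{q+1} + ℓ(x²) is a planar function on F_{q²}. -/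
/-!
Write `φ x = x ^ q` for the Frobenius involution of `F = 𝔽_{q²}`, so that `f x = φ x * x + ℓ (x ^ 2)`.
Then `f (x + c) - f x = B_c x + f c`, where `B_c x = c φ(x) + φ(c) x + ℓ(2 c x)` is additive, so
planarity amounts to `B_c` having trivial kernel. If `B_c x = 0`, then `t = c φ(x) + φ(c) x` lies in
`𝔽_q` and equals `-ℓ(2 c x)`, so both vanish by the condition on the image of `ℓ`. Thus `u = 2 c x`
is a root of `ℓ`, and `y = 2 φ(c) x` satisfies `φ y = -y` and `N(y) = N(u)`. Hence
`-N(u) = y²` is the square of an element of `𝔽_q` only if `y ∈ 𝔽_q`, i.e. `y = 0` and `x = 0`.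
-/

section FiniteField

variable {F : Type*} [Field F] [Fintype F] {q : ℕ}

theorem exists_ringHom_eq_pow_of_card_eq_sq (hF : Fintype.card F = q ^ 2) :
    ∃ φ : F →+* F, ∀ x, φ x = x ^ q := by
  obtain ⟨n, hr, hcard⟩ := FiniteField.card F (ringChar F)
  have hdvd : q ∣ ringChar F ^ (n : ℕ) := hcard ▸ hF ▸ dvd_pow_self q two_ne_zero
  obtain ⟨i, -, rfl⟩ := (Nat.dvd_prime_pow hr).mp hdvd
  have : Fact (ringChar F).Prime := ⟨hr⟩
  exact ⟨iterateFrobenius F (ringChar F) i, fun _ => rfl⟩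

theorem pow_pow_eq_self_of_card_eq_sq (hF : Fintype.card F = q ^ 2) (x : F) :
    (x ^ q) ^ q = x := by
  rw [← pow_mul, ← sq, ← hF, FiniteField.pow_card]

theorem two_ne_zero_of_card_eq_sq (hF : Fintype.card F = q ^ 2) (hq : Odd q) : (2 : F) ≠ 0 :=
  Ring.two_ne_zero fun h => by
    have heven := FiniteField.even_card_iff_char_two.mp h
    rw [hF, ← Nat.even_iff] at heven
    exact Nat.not_even_iff_odd.mpr hq.pow heven

end FiniteField

section Involution

variable {K : Type*} [Field K] (φ : K →+* K) (ℓ : K →+ K)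

theorem eq_zero_of_map_eq_neg_of_sq_eq {y b : K} (h2 : (2 : K) ≠ 0) (hy : φ y = -y)
    (hb : φ b = b) (hby : b ^ 2 = -(φ y * y)) : y = 0 := by
  rw [hy, neg_mul, neg_neg, ← sq] at hby
  have hfix : φ y = y := by
    rcases sq_eq_sq_iff_eq_or_eq_neg.mp hby with rfl | rfl
    · exact hb
    · simpa using hb
  exact (mul_eq_zero.mp (by linear_combination hy - hfix : (2 : K) * y = 0)).resolve_left h2

def normPolar (c : K) : K →+ K where
  toFun x := c * φ x + φ c * x + ℓ (2 * c * x)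
  map_zero' := by simp
  map_add' x y := by simp only [map_add, mul_add]; ring

theorem quadratic_add_eq_normPolar (x c : K) :
    φ (x + c) * (x + c) + ℓ ((x + c) ^ 2)
      = (φ x * x + ℓ (x ^ 2)) + normPolar φ ℓ c x + (φ c * c + ℓ (c ^ 2)) := by
  rw [show (x + c) ^ 2 = x ^ 2 + 2 * c * x + c ^ 2 by ring, map_add, map_add, map_add]
  simp only [normPolar, AddMonoidHom.coe_mk, ZeroHom.coe_mk]
  ring

theorem normPolar_injective (hφ : ∀ x, φ (φ x) = x) (h2 : (2 : K) ≠ 0)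
    (himage : ∀ x, φ (ℓ x) = ℓ x → ℓ x = 0)
    (hker : ∀ u, u ≠ 0 → ℓ u = 0 → ∃ b, φ b = b ∧ b ^ 2 = -(φ u * u))
    {c : K} (hc : c ≠ 0) : Function.Injective (normPolar φ ℓ c) := by
  refine (injective_iff_map_eq_zero _).mpr fun x hx => ?_
  simp only [normPolar, AddMonoidHom.coe_mk, ZeroHom.coe_mk] at hx
  set t := c * φ x + φ c * x with ht_def
  have ht : φ t = t := by simp only [ht_def, map_add, map_mul, hφ]; ring
  have hℓ : ℓ (2 * c * x) = 0 :=
    himage _ (by rw [eq_neg_of_add_eq_zero_right hx, map_neg, ht])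
  have ht0 : t = 0 := by rwa [hℓ, add_zero] at hx
  by_contra hx0
  obtain ⟨b, hb, hb2⟩ := hker _ (mul_ne_zero (mul_ne_zero h2 hc) hx0) hℓ
  set y := 2 * φ c * x
  have hy : φ y = -y := by
    simp only [y, map_mul, map_ofNat, hφ]; linear_combination 2 * ht0
  have hnorm : φ (2 * c * x) * (2 * c * x) = φ y * y := by
    simp only [y, map_mul, map_ofNat, hφ]; ring
  exact mul_ne_zero (mul_ne_zero h2 ((map_ne_zero φ).mpr hc)) hx0
    (eq_zero_of_map_eq_neg_of_sq_eq φ h2 hy hb (hnorm ▸ hb2))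

end Involution

theorem planar_of_kernel_condition_general
    (p m : ℕ) (hodd : Odd p)
    (q : ℕ) (hq : q = p ^ m)
    (F : Type*) [Field F] [Fintype F] (hF : Fintype.card F = q ^ 2)
    (ℓ : F → F) (hℓ : ∀ x y, ℓ (x + y) = ℓ x + ℓ y)
    (himage : ∀ x : F, (ℓ x) ^ q = ℓ x → ℓ x = 0)
    (hker : ∀ u : F, u ≠ 0 → ℓ u = 0 →
      ∃ b : F, b ≠ 0 ∧ b ^ q = b ∧ b ^ 2 = -(u ^ (q + 1)))
    (f : F → F) (hf : ∀ x, f x = x ^ (q + 1) + ℓ (x ^ 2)) :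
    ∀ c : F, c ≠ 0 → Function.Bijective (fun x => f (x + c) - f x) := by
  intro c hc
  obtain ⟨φ, hφ⟩ := exists_ringHom_eq_pow_of_card_eq_sq hF
  let L : F →+ F := AddMonoidHom.mk' ℓ hℓ
  have hf' : ∀ x, f x = φ x * x + L (x ^ 2) := fun x => by rw [hf, pow_succ, hφ]; rfl
  have hinj : Function.Injective (normPolar φ L c) := by
    refine normPolar_injective φ L (fun x => by rw [hφ, hφ, pow_pow_eq_self_of_card_eq_sq hF])
      (two_ne_zero_of_card_eq_sq hF (hq ▸ hodd.pow)) (fun x h => himage x (by rwa [← hφ]))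
      (fun u hu hℓu => ?_) hc
    obtain ⟨b, -, hb, hb2⟩ := hker u hu hℓu
    exact ⟨b, by rwa [hφ], by rwa [hφ, ← pow_succ]⟩
  have hdiff : (fun x => f (x + c) - f x) = (· + f c) ∘ normPolar φ L c := by
    funext x
    simp only [Function.comp_apply, hf', quadratic_add_eq_normPolar]
    ring
  rw [hdiff]
  exact Finite.injective_iff_bijective.mp ((add_left_injective _).comp hinj)

/-- if `ℓ(F_{q²}) ∩ F_q = {0}` and `−N(u)` is a nonzero square in `F_q`
for every nonzero root `u` of `ℓ`, then `x^{q+1} + ℓ(x²)` is planar on `F_{q²}`. -/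
theorem planar_of_kernel_condition
    (p m : ℕ) (hp : p.Prime) (hodd : Odd p) (hm : 0 < m)
    (q : ℕ) (hq : q = p ^ m)
    (F : Type*) [Field F] [Fintype F] (hF : Fintype.card F = q ^ 2)
    (ℓ : F → F) (hℓ : ∀ x y, ℓ (x + y) = ℓ x + ℓ y)
    (himage : ∀ x : F, (ℓ x) ^ q = ℓ x → ℓ x = 0)
    (hker : ∀ u : F, u ≠ 0 → ℓ u = 0 →
      ∃ b : F, b ≠ 0 ∧ b ^ q = b ∧ b ^ 2 = -(u ^ (q + 1)))
    (f : F → F) (hf : ∀ x, f x = x ^ (q + 1) + ℓ (x ^ 2)) :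
    ∀ c : F, c ≠ 0 → Function.Bijective (fun x => f (x + c) - f x) :=
  planar_of_kernel_condition_general p m hodd q hq F hF ℓ hℓ himage hker f hf
end

section
/- Let q be a power of an odd prime, A, B ∈ F_{q³}*, and r ∈ F_q. Then there exists x ∈ F_{q³}* with Tr(A·x^{q−1} + B·x^{1−q}) + r = 0 if and only if there exists u ∈ F_{q³} with Tr(u) = r and N(u) + N(A) + N(B) − Tr(A·B·u^{q²}) = 0. -/
/-!
Let `φ` be the `q`-Frobenius of `F = 𝔽_{q³}`: `N` and `Tr` are the product and the sum over the
orbit `z, φ z, φ² z`, and by Hilbert 90 the `x ^ (q - 1)` with `x ≠ 0` are the elements of norm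
one. For `y ≠ 0` put `u = -(A y + φ² (B / y))`. Then `Tr u = -Tr (A y + B / y)`, and with
`C u = N u + N A + N B - Tr (A B φ² u)` one has `N y · C u = (N y - 1) (N B - N A · N y)`,
which gives the forward direction.

Conversely, every `u` with `C u = 0` is of this form, with `y = φ s / A` for a root `s` of
`φ s · s + u s + φ² (A B)`. Unless `A B = u φ u`, such a root is a rational expression in `u`;
otherwise take `s = t φ² u` with `t ^ (q + 1) + t + 1 = 0`, and such a `t` lies in `𝔽_{q³}`
because `t ↦ -1 - 1 / t` has order three. If it is `N B - N A · N y` that vanishes, `B / (A y)`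
has norm one and the same value of `A y + B / y`.
-/

open Polynomial

section OrbitNorm

variable {F : Type*} [Field F] (φ : F →+* F)

-- For `φ` the `q`-Frobenius of `𝔽_{q³}` these are the norm and the trace down to `𝔽_q`.
def orbitNorm (z : F) : F := z * φ z * φ (φ z)

def orbitTrace (z : F) : F := z + φ z + φ (φ z)

def normForm (A B u : F) : F :=
  orbitNorm φ u + orbitNorm φ A + orbitNorm φ B - orbitTrace φ (A * B * φ (φ u))

theorem orbitNorm_ne_zero {z : F} (hz : z ≠ 0) : orbitNorm φ z ≠ 0 := by
  simp [orbitNorm, hz]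

theorem orbitNorm_mul (x z : F) : orbitNorm φ (x * z) = orbitNorm φ x * orbitNorm φ z := by
  simp only [orbitNorm, map_mul]; ring

theorem orbitNorm_div (x z : F) : orbitNorm φ (x / z) = orbitNorm φ x / orbitNorm φ z := by
  simp only [orbitNorm, map_div₀]; ring

theorem orbitTrace_add (x z : F) : orbitTrace φ (x + z) = orbitTrace φ x + orbitTrace φ z := by
  simp only [orbitTrace, map_add]; ring

theorem orbitTrace_neg (z : F) : orbitTrace φ (-z) = -orbitTrace φ z := by
  simp only [orbitTrace, map_neg]; ring

variable {φ} (hφ : ∀ z, φ (φ (φ z)) = z)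
include hφ

theorem orbitTrace_apply (z : F) : orbitTrace φ (φ z) = orbitTrace φ z := by
  simp only [orbitTrace, hφ]; ring

theorem orbitNorm_mul_normForm {y : F} (hy : y ≠ 0) (A B : F) :
    orbitNorm φ y * normForm φ A B (-(A * y + φ (φ (B / y)))) =
      (orbitNorm φ y - 1) * (orbitNorm φ B - orbitNorm φ A * orbitNorm φ y) := by
  have hy1 : φ y ≠ 0 := (map_ne_zero φ).2 hy
  have hy2 : φ (φ y) ≠ 0 := (map_ne_zero φ).2 hy1
  simp only [normForm, orbitNorm, orbitTrace, map_neg, map_add, map_mul, map_div₀, hφ]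
  field_simp
  ring

theorem exists_mul_add_mul_add_eq_zero {A B u : F} (hu : normForm φ A B u = 0)
    (ht : ∃ t, φ t * t + t + 1 = 0) : ∃ s, φ s * s + u * s + φ (φ (A * B)) = 0 := by
  simp only [normForm, orbitNorm, orbitTrace, map_mul, hφ] at hu
  by_cases hAB : A * B = u * φ u
  · obtain ⟨t, ht⟩ := ht
    refine ⟨t * φ (φ u), ?_⟩
    simp only [map_mul, hφ, hAB]
    linear_combination u * φ (φ u) * ht
  · obtain ⟨d, hd⟩ : ∃ d, d = A * B - u * φ u := ⟨_, rfl⟩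
    have hd0 : d ≠ 0 := hd ▸ sub_ne_zero.2 hAB
    have hφd0 : φ d ≠ 0 := (map_ne_zero φ).2 hd0
    refine ⟨(φ u * φ (φ (A * B)) - orbitNorm φ A) / d, ?_⟩
    rw [map_div₀]
    field_simp
    simp only [hd, orbitNorm, map_sub, map_mul, hφ]
    linear_combination A * φ A * φ (φ A) * hu

theorem exists_eq_neg_mul_add_of_normForm_eq_zero {A B u : F} (hA : A ≠ 0) (hB : B ≠ 0)
    (hu : normForm φ A B u = 0) (ht : ∃ t, φ t * t + t + 1 = 0) :
    ∃ y, y ≠ 0 ∧ u = -(A * y + φ (φ (B / y))) := by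
  obtain ⟨s, hs⟩ := exists_mul_add_mul_add_eq_zero hφ hu ht
  have hs0 : s ≠ 0 := by rintro rfl; simp [hA, hB] at hs
  refine ⟨φ s / A, div_ne_zero ((map_ne_zero φ).2 hs0) hA, ?_⟩
  rw [map_mul, map_mul] at hs
  simp only [map_div₀, hφ]
  field_simp
  linear_combination hs

theorem exists_orbitNorm_eq_one_iff {A B : F} (hA : A ≠ 0) (hB : B ≠ 0)
    (ht : ∃ t, φ t * t + t + 1 = 0) (r : F) :
    (∃ y, orbitNorm φ y = 1 ∧ orbitTrace φ (A * y + B * y⁻¹) + r = 0) ↔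
      ∃ u, orbitTrace φ u = r ∧ normForm φ A B u = 0 := by
  have htrace (y : F) : orbitTrace φ (-(A * y + φ (φ (B / y)))) =
      -orbitTrace φ (A * y + B * y⁻¹) := by
    rw [orbitTrace_neg, orbitTrace_add, orbitTrace_add, orbitTrace_apply hφ, orbitTrace_apply hφ,
      div_eq_mul_inv]
  constructor
  · rintro ⟨y, hy, hr⟩
    have hy0 : y ≠ 0 := by rintro rfl; simp [orbitNorm] at hy
    refine ⟨_, by rw [htrace]; linear_combination -hr, ?_⟩
    simpa [hy] using orbitNorm_mul_normForm hφ hy0 A B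
  · rintro ⟨u, rfl, hu⟩
    obtain ⟨y, hy0, rfl⟩ := exists_eq_neg_mul_add_of_normForm_eq_zero hφ hA hB hu ht
    have hr : orbitTrace φ (A * y + B * y⁻¹) + orbitTrace φ (-(A * y + φ (φ (B / y)))) = 0 :=
      by rw [htrace]; ring
    have hnorm := orbitNorm_mul_normForm hφ hy0 A B
    rw [hu, mul_zero, eq_comm, mul_eq_zero, sub_eq_zero, sub_eq_zero] at hnorm
    rcases hnorm with hy | hBy
    · exact ⟨y, hy, hr⟩
    · refine ⟨B / (A * y), ?_, ?_⟩
      · rw [orbitNorm_div, orbitNorm_mul, ← hBy, div_self (orbitNorm_ne_zero φ hB)]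
      · have hswap : A * (B / (A * y)) + B * (B / (A * y))⁻¹ = A * y + B * y⁻¹ := by
          field_simp; ring
        rwa [hswap]

end OrbitNorm

theorem RingHom.apply_apply_apply_eq_self_of_mul_add_add_one_eq_zero {K : Type*} [Field K]
    (ψ : K →+* K) {θ : K} (h : ψ θ * θ + θ + 1 = 0) : ψ (ψ (ψ θ)) = θ := by
  have h1 : ψ (ψ θ) * ψ θ + ψ θ + 1 = 0 := by simpa using congrArg ψ h
  have h2 : ψ (ψ (ψ θ)) * ψ (ψ θ) + ψ (ψ θ) + 1 = 0 := by simpa using congrArg ψ h1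
  have hθ2 : ψ (ψ θ) ≠ 0 := fun h0 => by simp [h0] at h2
  refine mul_right_cancel₀ hθ2 (sub_eq_zero.1 ?_)
  linear_combination h2 - (ψ (ψ θ) + 1) * h + θ * h1

theorem IsCyclic.exists_pow_eq_of_pow_eq_one {G : Type*} [CommGroup G] [IsCyclic G] [Finite G]
    {a b : ℕ} (hG : Nat.card G = a * b) {g : G} (hg : g ^ b = 1) : ∃ x : G, x ^ a = g := by
  have ha : 0 < a := Nat.pos_of_ne_zero <| by
    rintro rfl; exact Nat.card_pos.ne' (hG.trans (zero_mul b))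
  have hrange : (powMonoidHom a : G →* G).range = (powMonoidHom b).ker := by
    refine Subgroup.eq_of_le_of_card_ge ?_ ?_
    · rintro _ ⟨x, rfl⟩
      simp [← pow_mul, ← hG, pow_card_eq_one']
    · rw [IsCyclic.card_powMonoidHom_ker, IsCyclic.card_powMonoidHom_range, hG,
        Nat.gcd_mul_right_left, Nat.gcd_mul_left_left, Nat.mul_div_cancel_left _ ha]
  obtain ⟨x, hx⟩ : g ∈ (powMonoidHom a : G →* G).range := hrange ▸ hg
  exact ⟨x, hx⟩

namespace FiniteField

variable {F : Type*} [Field F] [Fintype F]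

theorem exists_ringHom_apply_eq_pow (K : Type*) [Field K] [Algebra F K] {q n : ℕ}
    (hF : Fintype.card F = q ^ n) (hn : n ≠ 0) : ∃ ψ : K →+* K, ∀ z, ψ z = z ^ q := by
  obtain ⟨N, hp, hcard⟩ := FiniteField.card F (ringChar F)
  obtain ⟨k, -, hq⟩ := (Nat.dvd_prime_pow hp).1 (hcard ▸ hF ▸ dvd_pow_self q hn)
  have : Fact (ringChar F).Prime := ⟨hp⟩
  have : CharP K (ringChar F) := charP_of_injective_algebraMap (algebraMap F K).injective _
  exact ⟨iterateFrobenius K (ringChar F) k, fun z => by rw [iterateFrobenius_def, hq]⟩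

theorem exists_pow_succ_add_add_one_eq_zero {q : ℕ} (hF : Fintype.card F = q ^ 3) :
    ∃ t : F, t ^ (q + 1) + t + 1 = 0 := by
  have hq0 : q ≠ 0 := by rintro rfl; simp at hF
  let i := algebraMap F (AlgebraicClosure F)
  have hdeg : (X ^ (q + 1) + X + 1 : F[X]).natDegree = q + 1 := by
    compute_degree!; simp [hq0]
  obtain ⟨θ, hθ⟩ := IsAlgClosed.exists_root ((X ^ (q + 1) + X + 1 : F[X]).map i) (by
    rw [degree_map]; exact (natDegree_pos_iff_degree_pos.1 (by omega)).ne')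
  obtain ⟨ψ, hψ⟩ := exists_ringHom_apply_eq_pow (AlgebraicClosure F) hF three_ne_zero
  have hψθ : ψ θ * θ + θ + 1 = 0 := by simpa [hψ, pow_succ] using hθ
  have hfix : θ ^ Fintype.card F = θ := by
    have := ψ.apply_apply_apply_eq_self_of_mul_add_add_one_eq_zero hψθ
    rwa [hψ, hψ, hψ, ← pow_mul, ← pow_mul, ← pow_three, ← hF] at this
  obtain ⟨t, rfl⟩ : θ ∈ i.range := Polynomial.splits_X_pow_nat_card_sub_X.mem_range_of_isRoot
    (X_pow_card_sub_X_ne_zero F Finite.one_lt_card) (by simp [hfix])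
  exact ⟨t, i.injective (by simpa using hθ)⟩

theorem exists_pow_sub_one_eq_iff {q : ℕ} (hF : Fintype.card F = q ^ 3) (y : F) :
    (∃ x : F, x ≠ 0 ∧ x ^ (q - 1) = y) ↔ y ^ (1 + q + q ^ 2) = 1 := by
  have hq : 1 ≤ q := Nat.pos_of_ne_zero (by rintro rfl; simp at hF)
  have hcard : Fintype.card F - 1 = (q - 1) * (1 + q + q ^ 2) := by
    rw [hF]; zify [hq, Nat.one_le_pow 3 q hq]; ring
  constructor
  · rintro ⟨x, hx, rfl⟩
    rw [← pow_mul, ← hcard, pow_card_sub_one_eq_one x hx]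
  · intro hy
    have hy0 : y ≠ 0 := by rintro rfl; simp at hy
    obtain ⟨x, hx⟩ := IsCyclic.exists_pow_eq_of_pow_eq_one
      (by rw [Nat.card_units, Nat.card_eq_fintype_card, hcard]) (g := Units.mk0 y hy0)
      (Units.ext (by simpa using hy))
    exact ⟨x, x.ne_zero, by simpa using congrArg Units.val hx⟩

end FiniteField

theorem root_exists_iff_trace_norm_general
    (q : ℕ)
    (F : Type*) [Field F] [Fintype F] (hF : Fintype.card F = q ^ 3)
    (A B : F) (hA : A ≠ 0) (hB : B ≠ 0)
    (r : F)
    (Tr : F → F) (hTr : ∀ x, Tr x = x + x ^ q + x ^ q ^ 2) :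
    (∃ x : F, x ≠ 0 ∧ Tr (A * x ^ (q - 1) + B * (x ^ (q - 1))⁻¹) + r = 0) ↔
      (∃ u : F, Tr u = r ∧
        u ^ (1 + q + q ^ 2) + A ^ (1 + q + q ^ 2) + B ^ (1 + q + q ^ 2)
          - Tr (A * B * u ^ q ^ 2) = 0) := by
  obtain ⟨φ, hφ⟩ := FiniteField.exists_ringHom_apply_eq_pow F hF three_ne_zero
  have hφφ (z : F) : φ (φ z) = z ^ q ^ 2 := by rw [hφ, hφ, ← pow_mul, sq]
  have hφ3 (z : F) : φ (φ (φ z)) = z := by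
    rw [hφφ, hφ, ← pow_mul, ← pow_succ', ← hF, FiniteField.pow_card]
  have hTrφ : Tr = orbitTrace φ := funext fun z => by rw [hTr, orbitTrace, hφφ, hφ]
  have hNφ (z : F) : z ^ (1 + q + q ^ 2) = orbitNorm φ z := by
    rw [orbitNorm, hφφ, hφ, pow_add, pow_add, pow_one]
  have ht : ∃ t, φ t * t + t + 1 = 0 := by
    simpa [hφ, pow_succ] using FiniteField.exists_pow_succ_add_add_one_eq_zero hF
  have key := exists_orbitNorm_eq_one_iff hφ3 hA hB ht r
  simp only [normForm, ← hNφ, ← FiniteField.exists_pow_sub_one_eq_iff hF, hφφ, ← hTrφ,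
    exists_exists_and_eq_and] at key
  exact key

/-- for `A, B ∈ F_{q³}*` and `r ∈ F_q`, there exists a nonzero root of
`Tr(A·x^{q−1} + B·x^{1−q}) + r` iff there exists `u ∈ F_{q³}` with `Tr(u) = r` and
`N(u) + N(A) + N(B) − Tr(A·B·u^{q²}) = 0`. -/
theorem root_exists_iff_trace_norm
    (p m : ℕ) (hp : p.Prime) (hodd : Odd p) (hm : 0 < m)
    (q : ℕ) (hq : q = p ^ m)
    (F : Type*) [Field F] [Fintype F] (hF : Fintype.card F = q ^ 3)
    (A B : F) (hA : A ≠ 0) (hB : B ≠ 0)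
    (r : F) (hr : r ^ q = r)
    (Tr : F → F) (hTr : ∀ x, Tr x = x + x ^ q + x ^ q ^ 2) :
    (∃ x : F, x ≠ 0 ∧ Tr (A * x ^ (q - 1) + B * (x ^ (q - 1))⁻¹) + r = 0) ↔
      (∃ u : F, Tr u = r ∧
        u ^ (1 + q + q ^ 2) + A ^ (1 + q + q ^ 2) + B ^ (1 + q + q ^ 2)
          - Tr (A * B * u ^ q ^ 2) = 0) :=
  root_exists_iff_trace_norm_general q F hF A B hA hB r Tr hTr
end
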